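/- arXiv:2008.01245 — 6 statements merged into one kernel-verified Lean document; each statement's English description precedes it below -/
import Mathlib

section
/- Let μ* be a Borel probability measure on ℝ^q satisfying both: (i) the ball measure condition μ*(B(x,r)) ≤ C₂ r^α for all x, r > 0, and (ii) the density condition μ*(B(x,r)) ≥ C₁ r^α for all x ∈ supp(μ*) and 0 < r ≤ r₀. Suppose a nonnegative kernel K_n satisfies the decay bound K_n(x,y) ≤ κ₄ n^{2q}/max(1,(n|x−y|_∞)^S) with S > α, and the near-diagonal lower bound K_n(x,y) ≥ (κ₁/2)n^{2q} whenever |x−y|_∞ ≤ κ₃/n. Then there exist constants c, C > 0 (depending only on q, α, S, C₁, C₂, κ₁, κ₃, κ₄, r₀) such that for all sufficiently large n: c n^{2q−α} ≤ inf_{x ∈ supp(μ*)} ∫ K_n(x,y) dμ*(y) ≤ sup_{x ∈ ℝ^q} ∫ K_n(x,y) dμ*(y) ≤ C n^{2q−α}. -/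
open MeasureTheory Metric

/-- The support of a measure: points all of whose closed balls have positive measure. -/
def msupport {X : Type*} [MeasurableSpace X] [PseudoMetricSpace X] (μ : Measure X) : Set X :=
  {x | ∀ r : ℝ, 0 < r → 0 < μ (Metric.closedBall x r)}

/-! For the upper bound, cover the space by the ball of radius `1/n` about `x` and the dyadic
annuli `2^j/n ≤ dist x y ≤ 2^(j+1)/n`. On the `j`-th annulus the kernel is at most
`κ₄ n^(2q) 2^(-jS)` and the annulus has measure at most `C₂ 2^((j+1)α) n^(-α)`, so the
contributions form a geometric series of ratio `2^(α-S) < 1`. For the lower bound, the kernel is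
at least `(κ₁/2) n^(2q)` on the ball of radius `κ₃/n`, whose measure is at least `C₁ κ₃^α n^(-α)`
as soon as `κ₃/n ≤ r₀`. -/

open scoped ENNReal

section DyadicAnnuli

variable {X : Type*} [PseudoMetricSpace X]

theorem closedBall_union_iUnion_dyadic_annuli (x : X) {δ : ℝ} (hδ : 0 < δ) :
    closedBall x δ ∪ ⋃ j : ℕ, closedBall x (2 ^ (j + 1) * δ) \ ball x (2 ^ j * δ) = Set.univ := by
  refine Set.eq_univ_of_forall fun y => ?_
  rcases le_or_gt (dist y x) δ with hy | hy
  · exact Or.inl hy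
  obtain ⟨j, hj, hj'⟩ := exists_nat_pow_near ((one_le_div hδ).2 hy.le) one_lt_two
  refine Or.inr (Set.mem_iUnion.2 ⟨j, ?_, ?_⟩)
  · exact mem_closedBall.2 ((div_le_iff₀ hδ).1 hj'.le)
  · exact fun h => (mem_ball.1 h).not_ge ((le_div_iff₀ hδ).1 hj)

variable [MeasurableSpace X]

theorem lintegral_le_closedBall_add_tsum_dyadic_annuli (μ : Measure X) (g : X → ℝ≥0∞) (x : X)
    {δ : ℝ} (hδ : 0 < δ) :
    ∫⁻ y, g y ∂μ ≤ ∫⁻ y in closedBall x δ, g y ∂μ +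
      ∑' j : ℕ, ∫⁻ y in closedBall x (2 ^ (j + 1) * δ) \ ball x (2 ^ j * δ), g y ∂μ :=
  calc ∫⁻ y, g y ∂μ
      = ∫⁻ y in closedBall x δ ∪ ⋃ j : ℕ, closedBall x (2 ^ (j + 1) * δ) \ ball x (2 ^ j * δ),
          g y ∂μ := by rw [closedBall_union_iUnion_dyadic_annuli x hδ, setLIntegral_univ]
    _ ≤ _ := (lintegral_union_le _ _ _).trans (add_le_add_right (lintegral_iUnion_le _ _) _)

end DyadicAnnuli

theorem setLIntegral_le_mul_measure_of_le {α : Type*} [MeasurableSpace α] {μ : Measure α}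
    {s : Set α} {g : α → ℝ≥0∞} {c : ℝ≥0∞} (hg : ∀ y ∈ s, g y ≤ c) :
    ∫⁻ y in s, g y ∂μ ≤ c * μ s :=
  (setLIntegral_mono measurable_const hg).trans_eq (setLIntegral_const s c)

theorem mul_measureReal_le_integral_of_le_on {α : Type*} [MeasurableSpace α] {μ : Measure α}
    {s : Set α} {f : α → ℝ} {b : ℝ} (hs : MeasurableSet s) (hμs : μ s ≠ ∞) (hf₀ : 0 ≤ f)
    (hfi : Integrable f μ) (hb : ∀ y ∈ s, b ≤ f y) :
    b * μ.real s ≤ ∫ y, f y ∂μ :=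
  (setIntegral_ge_of_const_le_real hs hμs hb hfi.integrableOn).trans
    (setIntegral_le_integral hfi (ae_of_all _ hf₀))

theorem dyadic_annulus_bound_eq (A C α S δ : ℝ) (hδ : 0 < δ) (j : ℕ) :
    A / ((2 : ℝ) ^ j) ^ S * (C * (2 ^ (j + 1) * δ) ^ α) =
      A * C * 2 ^ α * δ ^ α * ((2 : ℝ) ^ (α - S)) ^ j := by
  have h2 : (0 : ℝ) ≤ 2 := zero_le_two
  rw [Real.mul_rpow (by positivity) hδ.le, ← Real.rpow_pow_comm h2, ← Real.rpow_pow_comm h2,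
    Real.rpow_sub two_pos, div_pow, pow_succ]
  have : (0 : ℝ) < (2 ^ S) ^ j := by positivity
  field_simp

section Decay

variable {X : Type*} [PseudoMetricSpace X] [MeasurableSpace X] {μ : Measure X} {x : X}
  {f : X → ℝ} {A C α S δ : ℝ}

theorem lintegral_ofReal_le_of_decay (hA : 0 ≤ A) (hC : 0 ≤ C) (hS₀ : 0 ≤ S) (hαS : α < S)
    (hδ : 0 < δ) (hball : ∀ r, 0 < r → μ (closedBall x r) ≤ ENNReal.ofReal (C * r ^ α))
    (hf : ∀ y, f y ≤ A / max 1 ((dist x y / δ) ^ S)) :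
    ∫⁻ y, ENNReal.ofReal (f y) ∂μ ≤
      ENNReal.ofReal (A * C * (1 + 2 ^ α * (1 - 2 ^ (α - S))⁻¹) * δ ^ α) := by
  set ρ : ℝ := 2 ^ (α - S)
  have hρ₀ : 0 ≤ ρ := by positivity
  have hρ₁ : ρ < 1 := Real.rpow_lt_one_of_one_lt_of_neg one_lt_two (by linarith)
  have hcore : ∫⁻ y in closedBall x δ, ENNReal.ofReal (f y) ∂μ ≤
      ENNReal.ofReal (A * C * δ ^ α) :=
    calc _ ≤ ENNReal.ofReal A * μ (closedBall x δ) :=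
          setLIntegral_le_mul_measure_of_le fun y _ =>
            ENNReal.ofReal_le_ofReal ((hf y).trans (div_le_self hA (le_max_left _ _)))
      _ ≤ ENNReal.ofReal A * ENNReal.ofReal (C * δ ^ α) := by gcongr; exact hball δ hδ
      _ = _ := by rw [← ENNReal.ofReal_mul hA, mul_assoc]
  have hannulus : ∀ j : ℕ,
      ∫⁻ y in closedBall x (2 ^ (j + 1) * δ) \ ball x (2 ^ j * δ), ENNReal.ofReal (f y) ∂μ ≤
        ENNReal.ofReal (A * C * 2 ^ α * δ ^ α * ρ ^ j) := by
    intro j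
    have hfj : ∀ y ∈ closedBall x (2 ^ (j + 1) * δ) \ ball x (2 ^ j * δ),
        f y ≤ A / ((2 : ℝ) ^ j) ^ S := by
      rintro y ⟨-, hy⟩
      have hjy : (2 : ℝ) ^ j ≤ dist x y / δ := by
        rw [le_div_iff₀ hδ, dist_comm]; simpa using hy
      exact (hf y).trans (div_le_div_of_nonneg_left hA (by positivity)
        (le_max_of_le_right (Real.rpow_le_rpow (by positivity) hjy hS₀)))
    calc _ ≤ ENNReal.ofReal (A / ((2 : ℝ) ^ j) ^ S) * μ (closedBall x (2 ^ (j + 1) * δ)) :=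
          (setLIntegral_le_mul_measure_of_le fun y hy => ENNReal.ofReal_le_ofReal (hfj y hy)).trans
            (by gcongr; exact Set.sdiff_subset)
      _ ≤ ENNReal.ofReal (A / ((2 : ℝ) ^ j) ^ S) *
            ENNReal.ofReal (C * (2 ^ (j + 1) * δ) ^ α) := by
          gcongr; exact hball _ (by positivity)
      _ = _ := by rw [← ENNReal.ofReal_mul (by positivity), dyadic_annulus_bound_eq A C α S δ hδ j]
  calc ∫⁻ y, ENNReal.ofReal (f y) ∂μ ≤ _ := lintegral_le_closedBall_add_tsum_dyadic_annuli μ _ x hδ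
    _ ≤ ENNReal.ofReal (A * C * δ ^ α) +
          ∑' j : ℕ, ENNReal.ofReal (A * C * 2 ^ α * δ ^ α * ρ ^ j) :=
        add_le_add hcore (ENNReal.tsum_le_tsum hannulus)
    _ = ENNReal.ofReal (A * C * δ ^ α) + ENNReal.ofReal (A * C * 2 ^ α * δ ^ α * (1 - ρ)⁻¹) := by
        rw [← ENNReal.ofReal_tsum_of_nonneg (fun j => by positivity)
          ((summable_geometric_of_lt_one hρ₀ hρ₁).mul_left _), tsum_mul_left,
          tsum_geometric_of_lt_one hρ₀ hρ₁]
    _ = _ := by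
        rw [← ENNReal.ofReal_add (by positivity) (by have := sub_pos.2 hρ₁; positivity)]
        ring_nf

theorem integral_le_of_decay (hA : 0 ≤ A) (hC : 0 ≤ C) (hS₀ : 0 ≤ S) (hαS : α < S)
    (hδ : 0 < δ) (hball : ∀ r, 0 < r → μ (closedBall x r) ≤ ENNReal.ofReal (C * r ^ α))
    (hf₀ : 0 ≤ f) (hfm : AEStronglyMeasurable f μ)
    (hf : ∀ y, f y ≤ A / max 1 ((dist x y / δ) ^ S)) :
    ∫ y, f y ∂μ ≤ A * C * (1 + 2 ^ α * (1 - 2 ^ (α - S))⁻¹) * δ ^ α := by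
  have hρ : 0 < 1 - (2 : ℝ) ^ (α - S) :=
    sub_pos.2 (Real.rpow_lt_one_of_one_lt_of_neg one_lt_two (by linarith))
  rw [integral_eq_lintegral_of_nonneg_ae (ae_of_all _ hf₀) hfm]
  exact ENNReal.toReal_le_of_le_ofReal (by positivity)
    (lintegral_ofReal_le_of_decay hA hC hS₀ hαS hδ hball hf)

end Decay

theorem stmt1_general (q : ℕ)
    (μ : Measure (Fin q → ℝ)) [IsProbabilityMeasure μ]
    (C₁ C₂ α r₀ : ℝ) (hC₁ : 0 < C₁) (hC₂ : 0 < C₂) (hα : 0 ≤ α) (hr₀ : 0 < r₀)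
    (hball : ∀ (x : Fin q → ℝ) (r : ℝ), 0 < r →
      μ (Metric.closedBall x r) ≤ ENNReal.ofReal (C₂ * r ^ α))
    (hdens : ∀ x ∈ msupport μ, ∀ r : ℝ, 0 < r → r ≤ r₀ →
      ENNReal.ofReal (C₁ * r ^ α) ≤ μ (Metric.closedBall x r))
    (K : ℕ → (Fin q → ℝ) → (Fin q → ℝ) → ℝ)
    (S κ₁ κ₃ κ₄ : ℝ) (hS : α < S) (hκ₁ : 0 < κ₁) (hκ₃ : 0 < κ₃) (hκ₄ : 0 < κ₄)
    (hKnonneg : ∀ n x y, 0 ≤ K n x y)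
    (hKm : ∀ n x, Measurable (K n x))
    (hdecay : ∀ (n : ℕ), 1 ≤ n → ∀ x y,
      K n x y ≤ κ₄ * (n : ℝ) ^ (2 * (q : ℝ)) / max 1 (((n : ℝ) * dist x y) ^ S))
    (hneardiag : ∀ (n : ℕ), 1 ≤ n → ∀ x y, dist x y ≤ κ₃ / n →
      (κ₁ / 2) * (n : ℝ) ^ (2 * (q : ℝ)) ≤ K n x y) :
    ∃ c C : ℝ, 0 < c ∧ 0 < C ∧ ∃ N : ℕ, ∀ n : ℕ, N ≤ n →
      (∀ x ∈ msupport μ, c * (n : ℝ) ^ (2 * (q : ℝ) - α) ≤ ∫ y, K n x y ∂μ) ∧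
      (∀ x : Fin q → ℝ, ∫ y, K n x y ∂μ ≤ C * (n : ℝ) ^ (2 * (q : ℝ) - α)) := by
  have hS₀ : 0 ≤ S := hα.trans hS.le
  have hρ : 0 < 1 - (2 : ℝ) ^ (α - S) :=
    sub_pos.2 (Real.rpow_lt_one_of_one_lt_of_neg one_lt_two (by linarith))
  refine ⟨κ₁ / 2 * (C₁ * κ₃ ^ α), κ₄ * C₂ * (1 + 2 ^ α * (1 - 2 ^ (α - S))⁻¹), by positivity,
    by positivity, max 1 ⌈κ₃ / r₀⌉₊, fun n hn => ⟨fun x hx => ?_, fun x => ?_⟩⟩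
  all_goals
    have hn₁ : 1 ≤ n := le_of_max_le_left hn
    have hn₀ : (0 : ℝ) < n := by exact_mod_cast hn₁
  · have hr : κ₃ / n ≤ r₀ := (div_le_iff₀ hn₀).2 <| (div_le_iff₀' hr₀).1 <|
      (Nat.le_ceil _).trans (by exact_mod_cast le_of_max_le_right hn)
    have hKi : Integrable (K n x) μ := .of_bound (hKm n x).aestronglyMeasurable
      (κ₄ * n ^ (2 * (q : ℝ))) <| ae_of_all _ fun y => by
        rw [Real.norm_of_nonneg (hKnonneg n x y)]
        exact (hdecay n hn₁ x y).trans (div_le_self (by positivity) (le_max_left _ _))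
    calc κ₁ / 2 * (C₁ * κ₃ ^ α) * (n : ℝ) ^ (2 * (q : ℝ) - α)
        = κ₁ / 2 * n ^ (2 * (q : ℝ)) * (C₁ * (κ₃ / n) ^ α) := by
          rw [Real.rpow_sub hn₀, Real.div_rpow hκ₃.le hn₀.le]; ring
      _ ≤ κ₁ / 2 * n ^ (2 * (q : ℝ)) * μ.real (closedBall x (κ₃ / n)) := by
          gcongr
          exact (ENNReal.ofReal_le_iff_le_toReal (measure_ne_top _ _)).1
            (hdens x hx _ (by positivity) hr)
      _ ≤ ∫ y, K n x y ∂μ :=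
          mul_measureReal_le_integral_of_le_on measurableSet_closedBall (measure_ne_top _ _)
            (hKnonneg n x) hKi fun y hy => hneardiag n hn₁ x y (by rwa [dist_comm])
  · calc ∫ y, K n x y ∂μ
        ≤ κ₄ * n ^ (2 * (q : ℝ)) * C₂ * (1 + 2 ^ α * (1 - 2 ^ (α - S))⁻¹) * (n : ℝ)⁻¹ ^ α :=
          integral_le_of_decay (by positivity) hC₂.le hS₀ hS (by positivity) (hball x)
            (hKnonneg n x) (hKm n x).aestronglyMeasurable fun y => by
              simpa only [div_inv_eq_mul, mul_comm] using hdecay n hn₁ x y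
      _ = _ := by rw [Real.inv_rpow hn₀.le, Real.rpow_sub hn₀]; ring

/-- two-sided bounds on the kernel integral, of order n^{2q-α}. -/
theorem stmt1 (q : ℕ) (hq : 1 ≤ q)
    (μ : Measure (Fin q → ℝ)) [IsProbabilityMeasure μ]
    (C₁ C₂ α r₀ : ℝ) (hC₁ : 0 < C₁) (hC₂ : 0 < C₂) (hα : 0 ≤ α) (hr₀ : 0 < r₀)
    (hball : ∀ (x : Fin q → ℝ) (r : ℝ), 0 < r →
      μ (Metric.closedBall x r) ≤ ENNReal.ofReal (C₂ * r ^ α))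
    (hdens : ∀ x ∈ msupport μ, ∀ r : ℝ, 0 < r → r ≤ r₀ →
      ENNReal.ofReal (C₁ * r ^ α) ≤ μ (Metric.closedBall x r))
    (K : ℕ → (Fin q → ℝ) → (Fin q → ℝ) → ℝ)
    (S κ₁ κ₃ κ₄ : ℝ) (hS : α < S) (hκ₁ : 0 < κ₁) (hκ₃ : 0 < κ₃) (hκ₄ : 0 < κ₄)
    (hKnonneg : ∀ n x y, 0 ≤ K n x y)
    (hKm : ∀ n x, Measurable (K n x))
    (hdecay : ∀ (n : ℕ), 1 ≤ n → ∀ x y,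
      K n x y ≤ κ₄ * (n : ℝ) ^ (2 * (q : ℝ)) / max 1 (((n : ℝ) * dist x y) ^ S))
    (hneardiag : ∀ (n : ℕ), 1 ≤ n → ∀ x y, dist x y ≤ κ₃ / n →
      (κ₁ / 2) * (n : ℝ) ^ (2 * (q : ℝ)) ≤ K n x y) :
    ∃ c C : ℝ, 0 < c ∧ 0 < C ∧ ∃ N : ℕ, ∀ n : ℕ, N ≤ n →
      (∀ x ∈ msupport μ, c * (n : ℝ) ^ (2 * (q : ℝ) - α) ≤ ∫ y, K n x y ∂μ) ∧
      (∀ x : Fin q → ℝ, ∫ y, K n x y ∂μ ≤ C * (n : ℝ) ^ (2 * (q : ℝ) - α)) :=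
  stmt1_general q μ C₁ C₂ α r₀ hC₁ hC₂ hα hr₀ hball hdens K S κ₁ κ₃ κ₄ hS hκ₁ hκ₃ hκ₄ hKnonneg hKm
    hdecay hneardiag
end

section
/- Let μ* = Σ_{k=1}^∞ 2^{−k} δ_{π/2^k} be a probability measure on ℝ. Then μ* satisfies the ball measure condition with exponent α = 0 (i.e., μ*(B(x,r)) ≤ 1 for all x, r), but there is no α > 0 for which the ball measure condition μ*(B(x,r)) ≤ C₂ r^α holds, and the density condition with α = 0 (i.e., existence of C₁ > 0, r₀ > 0 with μ*(B(x,r)) ≥ C₁ for all x ∈ supp(μ*), 0 < r ≤ r₀) fails. In particular, μ* is not detectable for any exponent α. -/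
open MeasureTheory Metric
open scoped ENNReal

/-- The measure μ* = Σ_{k=1}^∞ 2^{-k} δ_{π/2^k} on ℝ. -/
noncomputable def mu3 : Measure ℝ :=
  Measure.sum (fun k : ℕ => ((2 : ℝ≥0∞) ^ (k + 1))⁻¹ • Measure.dirac (Real.pi / 2 ^ (k + 1)))

lemma mu3_apply {s : Set ℝ} (hs : MeasurableSet s) :
    mu3 s = ∑' k : ℕ, ((2 : ℝ≥0∞) ^ (k + 1))⁻¹ * s.indicator 1 (Real.pi / 2 ^ (k + 1)) := by
  rw [mu3, Measure.sum_apply _ hs]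
  simp [Measure.dirac_apply' _ hs]

lemma mu3_lower (k : ℕ) (r : ℝ) (hr : 0 < r) :
    ((2 : ℝ≥0∞) ^ (k + 1))⁻¹ ≤ mu3 (Metric.closedBall (Real.pi / 2 ^ (k + 1)) r) := by
  have h := Measure.le_sum
    (fun k : ℕ => ((2 : ℝ≥0∞) ^ (k + 1))⁻¹ • Measure.dirac (Real.pi / 2 ^ (k + 1))) k
  have hmem : Real.pi / 2 ^ (k + 1) ∈ Metric.closedBall (Real.pi / 2 ^ (k + 1)) r :=
    Metric.mem_closedBall_self hr.le
  calc ((2 : ℝ≥0∞) ^ (k + 1))⁻¹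
      = (((2 : ℝ≥0∞) ^ (k + 1))⁻¹ • Measure.dirac (Real.pi / 2 ^ (k + 1)))
          (Metric.closedBall (Real.pi / 2 ^ (k + 1)) r) := by
        rw [Measure.smul_apply, Measure.dirac_apply' _ measurableSet_closedBall,
          Set.indicator_of_mem hmem]
        simp
    _ ≤ mu3 (Metric.closedBall (Real.pi / 2 ^ (k + 1)) r) := h _

lemma mu3_mem_support (k : ℕ) : (Real.pi / 2 ^ (k + 1)) ∈ msupport mu3 := by
  intro r hr
  refine lt_of_lt_of_le ?_ (mu3_lower k r hr)
  simp [pos_iff_ne_zero, ENNReal.pow_ne_top]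

lemma tail_sum (k : ℕ) :
    ∑' j : ℕ, (if k ≤ j then ((2 : ℝ≥0∞) ^ (j + 1))⁻¹ else 0) = ((2 : ℝ≥0∞))⁻¹ ^ k := by
  induction k with
  | zero =>
    simp only [Nat.zero_le, if_true, pow_zero]
    have : ∀ j : ℕ, ((2 : ℝ≥0∞) ^ (j + 1))⁻¹ = (2 : ℝ≥0∞)⁻¹ ^ (j + 1) := fun j => by
      rw [ENNReal.inv_pow]
    simp_rw [this]
    rw [ENNReal.tsum_geometric_add_one]
    rw [ENNReal.one_sub_inv_two]
    simp [ENNReal.inv_mul_cancel]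
  | succ k ih =>
    have hsplit : ∀ j : ℕ, (if k ≤ j then ((2 : ℝ≥0∞) ^ (j + 1))⁻¹ else 0)
        = (if j = k then ((2 : ℝ≥0∞) ^ (k + 1))⁻¹ else 0)
          + (if k + 1 ≤ j then ((2 : ℝ≥0∞) ^ (j + 1))⁻¹ else 0) := by
      intro j
      rcases lt_trichotomy j k with h | h | h
      · simp [Nat.not_le.mpr h, Nat.not_le.mpr (Nat.lt_succ_of_lt h), h.ne]
      · subst h; simp
      · simp [h.le, Nat.succ_le_of_lt h, h.ne']
    rw [funext hsplit, ENNReal.tsum_add, tsum_ite_eq] at ih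
    have hne : ((2 : ℝ≥0∞) ^ (k + 1))⁻¹ ≠ ⊤ := by
      simp
    have h2 : (2 : ℝ≥0∞)⁻¹ ^ k = ((2 : ℝ≥0∞) ^ (k + 1))⁻¹ + ((2 : ℝ≥0∞) ^ (k + 1))⁻¹ := by
      have hx : ((2:ℝ≥0∞) ^ (k+1))⁻¹ = 2⁻¹ ^ k * 2⁻¹ := by
        rw [← ENNReal.inv_pow, pow_succ,
          ENNReal.mul_inv (Or.inl (by simp)) (Or.inr (by norm_num)), ENNReal.inv_pow]
      rw [hx, ← mul_add, ENNReal.inv_two_add_inv_two, mul_one]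
    rw [h2] at ih
    have := (ENNReal.add_right_inj hne).mp ih.symm
    rw [← this, ENNReal.inv_pow]

lemma mu3_upper (k : ℕ) (r : ℝ) (hr : r ≤ Real.pi / 2 ^ (k + 2)) :
    mu3 (Metric.closedBall (Real.pi / 2 ^ (k + 1)) r) ≤ ((2 : ℝ≥0∞))⁻¹ ^ k := by
  rw [mu3_apply measurableSet_closedBall, ← tail_sum k]
  refine ENNReal.tsum_le_tsum fun j => ?_
  by_cases hj : k ≤ j
  · rw [if_pos hj]
    calc ((2 : ℝ≥0∞) ^ (j + 1))⁻¹ * _ ≤ ((2 : ℝ≥0∞) ^ (j + 1))⁻¹ * 1 := by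
          gcongr
          unfold Set.indicator
          split <;> simp
      _ = ((2 : ℝ≥0∞) ^ (j + 1))⁻¹ := mul_one _
  · rw [if_neg hj]
    push_neg at hj
    -- j < k, so j + 1 ≤ k: the atom π/2^(j+1) is far from π/2^(k+1)
    have hnotmem : Real.pi / 2 ^ (j + 1) ∉ Metric.closedBall (Real.pi / 2 ^ (k + 1)) r := by
      rw [Metric.mem_closedBall, Real.dist_eq, not_le]
      have hπ := Real.pi_pos
      have h1 : Real.pi / 2 ^ (j + 1) ≥ Real.pi / 2 ^ k := by
        apply div_le_div_of_nonneg_left hπ.le (by positivity)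
        exact pow_le_pow_right₀ (by norm_num) hj
      have h2 : Real.pi / 2 ^ k - Real.pi / 2 ^ (k + 1) = Real.pi / 2 ^ (k + 1) := by
        field_simp; ring
      have h3 : Real.pi / 2 ^ (k + 2) < Real.pi / 2 ^ (k + 1) := by
        apply div_lt_div_of_pos_left hπ (by positivity)
        exact pow_lt_pow_right₀ (by norm_num) (by omega)
      have h4 : Real.pi / 2 ^ (k + 1) < Real.pi / 2 ^ (j + 1) := by
        calc Real.pi / 2 ^ (k + 1) < Real.pi / 2 ^ k := by
              apply div_lt_div_of_pos_left hπ (by positivity)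
              exact pow_lt_pow_right₀ (by norm_num) (by omega)
          _ ≤ Real.pi / 2 ^ (j + 1) := h1
      rw [abs_of_pos (by linarith)]
      calc r ≤ Real.pi / 2 ^ (k + 2) := hr
        _ < Real.pi / 2 ^ (k + 1) := h3
        _ = Real.pi / 2 ^ k - Real.pi / 2 ^ (k + 1) := h2.symm
        _ ≤ Real.pi / 2 ^ (j + 1) - Real.pi / 2 ^ (k + 1) := by linarith
    rw [Set.indicator_of_notMem hnotmem, mul_zero]

/-- mu3 satisfies the ball measure condition with α = 0 but with no α > 0,
and the density condition with α = 0 fails; hence mu3 is not detectable. -/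
theorem stmt3 :
    (∀ x r : ℝ, mu3 (Metric.closedBall x r) ≤ 1) ∧
    (¬ ∃ α C₂ : ℝ, 0 < α ∧ 0 < C₂ ∧ ∀ x r : ℝ, 0 < r →
        mu3 (Metric.closedBall x r) ≤ ENNReal.ofReal (C₂ * r ^ α)) ∧
    (¬ ∃ C₁ r₀ : ℝ, 0 < C₁ ∧ 0 < r₀ ∧ ∀ x ∈ msupport mu3, ∀ r : ℝ, 0 < r → r ≤ r₀ →
        ENNReal.ofReal C₁ ≤ mu3 (Metric.closedBall x r)) := by
  have huniv : mu3 Set.univ = 1 := by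
    rw [mu3_apply MeasurableSet.univ]
    simp only [Set.indicator_univ, Pi.one_apply, mul_one]
    have h0 := tail_sum 0
    simpa using h0
  refine ⟨?_, ?_, ?_⟩
  · intro x r
    calc mu3 (Metric.closedBall x r) ≤ mu3 Set.univ := measure_mono (Set.subset_univ _)
      _ = 1 := huniv
  · rintro ⟨α, C₂, hα, hC₂, h⟩
    set r : ℝ := (1 / (4 * C₂)) ^ α⁻¹ with hr_def
    have hrpos : 0 < r := Real.rpow_pos_of_pos (by positivity) _
    have hrα : r ^ α = 1 / (4 * C₂) := Real.rpow_inv_rpow (by positivity) hα.ne'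
    have hle := h (Real.pi / 2 ^ (0 + 1)) r hrpos
    have hlow := mu3_lower 0 r hrpos
    have : ((2 : ℝ≥0∞) ^ (0 + 1))⁻¹ ≤ ENNReal.ofReal (C₂ * r ^ α) := hlow.trans hle
    rw [hrα] at this
    have hval : C₂ * (1 / (4 * C₂)) = 1 / 4 := by field_simp
    rw [hval] at this
    norm_num at this
    have h14 : ENNReal.ofReal (1 / 4) < (2 : ℝ≥0∞)⁻¹ := by
      rw [show ((2 : ℝ≥0∞))⁻¹ = ENNReal.ofReal (1 / 2) by
        rw [ENNReal.ofReal_div_of_pos (by norm_num)]; simp]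
      exact ENNReal.ofReal_lt_ofReal_iff (by norm_num) |>.mpr (by norm_num)
    exact absurd this (not_le.mpr h14)
  · rintro ⟨C₁, r₀, hC₁, hr₀, h⟩
    obtain ⟨k, hk⟩ := exists_pow_lt_of_lt_one hC₁ (show (1/2 : ℝ) < 1 by norm_num)
    have hπ := Real.pi_pos
    set r : ℝ := min r₀ (Real.pi / 2 ^ (k + 2)) with hr_def
    have hrpos : 0 < r := lt_min hr₀ (by positivity)
    have hle := h _ (mu3_mem_support k) r hrpos (min_le_left _ _)
    have hup := mu3_upper k r (min_le_right _ _)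
    have : ENNReal.ofReal C₁ ≤ ((2 : ℝ≥0∞))⁻¹ ^ k := hle.trans hup
    have heq : ((2 : ℝ≥0∞))⁻¹ ^ k = ENNReal.ofReal ((1/2 : ℝ) ^ k) := by
      rw [ENNReal.ofReal_pow (by norm_num)]
      congr 1
      rw [ENNReal.ofReal_div_of_pos (by norm_num)]; simp
    rw [heq] at this
    have := (ENNReal.ofReal_le_ofReal_iff (by positivity)).mp this
    linarith
end

section
/- Let μ* be a probability measure on a measurable space, and suppose S₁,…,S_K, S_{K+1} is a measurable partition of the support of μ*. Let G₁,…,G_K be disjoint measurable sets forming a partition of a set containing supp(μ*), such that for each k = 1,…,K: supp(μ*) ∩ S_k ⊆ G_k and μ*(G_k) ≤ μ*(S_k) + μ*(S_{K+1}). Define the per-cluster F-scores F(G_k) = 2 max_{1≤j≤K} μ*(G_k ∩ S_j)/(μ*(G_k) + μ*(S_j)) and the micro-averaged F-score 𝓕 = Σ_k μ*(G_k) F(G_k) / μ*(∪_k G_k). Then 𝓕 ≥ 1 − μ*(S_{K+1}) / (2 min_{1≤k≤K} μ*(S_k)). -/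
/-!
The complement of the support is μ-null, so `S_k ⊆ G_k` up to a null set and
`F(G_k) ≥ 2μ(S_k)/(μ(G_k) + μ(S_k)) ≥ 2μ(S_k)/(2μ(S_k) + μ(S_{K+1}))`
`= 1 - μ(S_{K+1})/(2μ(S_k) + μ(S_{K+1}))`, which is at least `1 - μ(S_{K+1})/(2 min_j μ(S_j))`.
The `G_k` are disjoint and cover the support, so their masses sum to `1` and the
micro-averaged score is a convex combination of the `F(G_k)`.
-/

open MeasureTheory Metric

section Support

variable {X : Type*} [MeasurableSpace X] [PseudoMetricSpace X] [SecondCountableTopology X]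
  {μ : Measure X}

theorem measure_compl_msupport : μ (msupport μ)ᶜ = 0 := by
  refine measure_null_of_locally_null _ fun x hx => ?_
  simp only [msupport, Set.mem_compl_iff, Set.mem_ofPred_eq, not_forall, not_lt,
    nonpos_iff_eq_zero] at hx
  obtain ⟨r, hr, hball⟩ := hx
  exact ⟨closedBall x r, mem_nhdsWithin_of_mem_nhds (closedBall_mem_nhds x hr), hball⟩

theorem ae_mem_msupport : ∀ᵐ x ∂μ, x ∈ msupport μ :=
  measure_compl_msupport

theorem measure_le_of_msupport_inter_subset {A B : Set X} (h : msupport μ ∩ A ⊆ B) :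
    μ A ≤ μ B :=
  measure_mono_ae <| by
    filter_upwards [ae_mem_msupport] with x hx hA using h ⟨hx, hA⟩

theorem measure_eq_one_of_msupport_subset [IsProbabilityMeasure μ] {B : Set X}
    (h : msupport μ ⊆ B) : μ B = 1 :=
  le_antisymm prob_le_one <| measure_univ.symm.trans_le <|
    measure_le_of_msupport_inter_subset (Set.inter_subset_left.trans h)

end Support

/-- Here `s = μ(S_k)`, `t = μ(G_k ∩ S_k)`, `g = μ(G_k)`, `L = μ(S_{K+1})`,
`m = min_j μ(S_j)`. -/
theorem one_sub_div_two_mul_le_two_mul_div {m s t g L : ℝ} (hm : 0 < m) (hms : m ≤ s)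
    (hst : s ≤ t) (hg : 0 ≤ g) (hgs : g ≤ s + L) (hL : 0 ≤ L) :
    1 - L / (2 * m) ≤ 2 * (t / (g + s)) := by
  have hs : 0 < s := hm.trans_le hms
  calc 1 - L / (2 * m) ≤ 1 - L / (2 * s + L) := by
        gcongr
        linarith
    _ = 2 * (s / (s + s + L)) := by field_simp; ring
    _ ≤ 2 * (t / (g + s)) := by
        gcongr 2 * ?_
        exact div_le_div₀ (hs.le.trans hst) hst (by linarith) (by linarith)

theorem le_sum_mul_of_sum_eq_one {ι : Type*} (s : Finset ι) {w f : ι → ℝ} {c : ℝ}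
    (hw : ∀ i ∈ s, 0 ≤ w i) (hsum : ∑ i ∈ s, w i = 1) (hf : ∀ i ∈ s, c ≤ f i) :
    c ≤ ∑ i ∈ s, w i * f i :=
  calc c = ∑ i ∈ s, w i * c := by rw [← Finset.sum_mul, hsum, one_mul]
    _ ≤ ∑ i ∈ s, w i * f i :=
      Finset.sum_le_sum fun i hi => mul_le_mul_of_nonneg_left (hf i hi) (hw i hi)

theorem stmt7_general (q K : ℕ)
    (μ : Measure (Fin q → ℝ)) [IsProbabilityMeasure μ]
    (S : Fin (K + 1) → Set (Fin q → ℝ)) (G : Fin K → Set (Fin q → ℝ))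
    (hGmeas : ∀ k, MeasurableSet (G k))
    (hGdisj : Pairwise (Function.onFun Disjoint G))
    (hGcover : msupport μ ⊆ ⋃ k, G k)
    (hSk : ∀ k : Fin K, msupport μ ∩ S k.castSucc ⊆ G k)
    (hGk : ∀ k : Fin K,
      (μ (G k)).toReal ≤ (μ (S k.castSucc)).toReal + (μ (S (Fin.last K))).toReal)
    (hSpos : ∀ k : Fin K, 0 < (μ (S k.castSucc)).toReal) :
    1 - (μ (S (Fin.last K))).toReal / (2 * ⨅ k : Fin K, (μ (S k.castSucc)).toReal) ≤
      (∑ k : Fin K, (μ (G k)).toReal *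
        (2 * ⨆ j : Fin K, (μ (G k ∩ S j.castSucc)).toReal /
          ((μ (G k)).toReal + (μ (S j.castSucc)).toReal))) / (μ (⋃ k, G k)).toReal := by
  have hcover : μ (⋃ k, G k) = 1 := measure_eq_one_of_msupport_subset hGcover
  have hsum : ∑ k, (μ (G k)).toReal = 1 := by
    simpa [measureReal_def, hcover] using (measureReal_iUnion_fintype (μ := μ) hGdisj hGmeas).symm
  rw [hcover, ENNReal.toReal_one, div_one]
  refine le_sum_mul_of_sum_eq_one _ (fun _ _ => ENNReal.toReal_nonneg) hsum fun k _ => ?_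
  -- over an empty index set the `⨅` would be the junk value `0`; the index `k` rules this out
  have : Nonempty (Fin K) := ⟨k⟩
  obtain ⟨k₀, hk₀⟩ := Finite.exists_min fun j : Fin K => (μ (S j.castSucc)).toReal
  have hmin_pos : 0 < ⨅ j : Fin K, (μ (S j.castSucc)).toReal :=
    (hSpos k₀).trans_le (le_ciInf hk₀)
  have hS_le_GS : (μ (S k.castSucc)).toReal ≤ (μ (G k ∩ S k.castSucc)).toReal :=
    ENNReal.toReal_mono (measure_ne_top μ _) <| measure_le_of_msupport_inter_subset
      fun x hx => ⟨hSk k hx, hx.2⟩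
  refine (one_sub_div_two_mul_le_two_mul_div hmin_pos
    (ciInf_le (Finite.bddBelow_range _) k) hS_le_GS ENNReal.toReal_nonneg (hGk k)
    ENNReal.toReal_nonneg).trans ?_
  gcongr
  exact le_ciSup (f := fun j : Fin K => (μ (G k ∩ S j.castSucc)).toReal /
    ((μ (G k)).toReal + (μ (S j.castSucc)).toReal)) (Finite.bddAbove_range _) k

/-- lower bound on the micro-averaged F-score of clusters G_k
containing the in-support parts of the ground-truth sets S_k. -/
theorem stmt7 (q K : ℕ) (hK : 0 < K)
    (μ : Measure (Fin q → ℝ)) [IsProbabilityMeasure μ]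
    (S : Fin (K + 1) → Set (Fin q → ℝ)) (G : Fin K → Set (Fin q → ℝ))
    (hSmeas : ∀ k, MeasurableSet (S k)) (hGmeas : ∀ k, MeasurableSet (G k))
    (hSdisj : Pairwise (Function.onFun Disjoint S))
    (hSunion : (⋃ k, S k) = msupport μ)
    (hGdisj : Pairwise (Function.onFun Disjoint G))
    (hGcover : msupport μ ⊆ ⋃ k, G k)
    (hSk : ∀ k : Fin K, msupport μ ∩ S k.castSucc ⊆ G k)
    (hGk : ∀ k : Fin K,
      (μ (G k)).toReal ≤ (μ (S k.castSucc)).toReal + (μ (S (Fin.last K))).toReal)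
    (hSpos : ∀ k : Fin K, 0 < (μ (S k.castSucc)).toReal) :
    1 - (μ (S (Fin.last K))).toReal / (2 * ⨅ k : Fin K, (μ (S k.castSucc)).toReal) ≤
      (∑ k : Fin K, (μ (G k)).toReal *
        (2 * ⨆ j : Fin K, (μ (G k ∩ S j.castSucc)).toReal /
          ((μ (G k)).toReal + (μ (S j.castSucc)).toReal))) / (μ (⋃ k, G k)).toReal :=
  stmt7_general q K μ S G hGmeas hGdisj hGcover hSk hGk hSpos
end

section
/- Let μ* be a detectable probability measure on ℝ^q with exponent α, and let I_n = sup_{z ∈ supp(μ*)} ∫ Φ_n(z,y)² dμ*(y), where Φ_n is a kernel satisfying: Φ_n(x,y)² ≤ κ₄ n^{2q}/max(1,(n|x−y|_∞)^S) for S > α, and ∫ Φ_n(x,y)² dμ*(y) ≥ n^{2q−α}/C₄ for x ∈ supp(μ*). Fix θ with 0 < θ ≤ min((4C₃C₄)^{−1}, C₃C₄), where C₃ is the constant from the annulus-integral estimate ∫_{ℝ^q∖B(x,d)} Φ_n(x,y)² dμ*(y) ≤ C₃ n^{2q−α}(nd)^{α−S} for d ≥ 1/n. Define S_n(θ) = {x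 ∈ ℝ^q : ∫ Φ_n(x,y)² dμ*(y) ≥ 4θ I_n} and d(θ) = (C₃C₄/θ)^{1/(S−α)}. Then supp(μ*) ⊆ S_n(θ) ⊆ {x ∈ ℝ^q : dist(x, supp(μ*)) ≤ d(θ)/n}, where dist is with respect to the ℓ^∞ norm. -/
open MeasureTheory Metric

/-!
Both inclusions only compare `F x = ∫ Φ(x, y)² dμ(y)` with `I = sup_{supp μ} F`. On the support,
`F ≥ n^{2q-α}/C₄ ≥ 4θ C₃ n^{2q-α} ≥ 4θ I`. Off the `d(θ)/n`-neighbourhood of the support, the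
ball `B(x, d(θ)/n)` is `μ`-null, so `F x` equals the integral over its complement, which the
annulus estimate (applicable since `θ ≤ C₃C₄` gives `d(θ) ≥ 1`) bounds by `C₃ n^{2q-α} d(θ)^{α-S} = θ n^{2q-α}/C₄ < 4θ I`.
-/

section Support

variable {X : Type*} [MeasurableSpace X] [PseudoMetricSpace X] (μ : Measure X)

theorem msupport_eq_support : msupport μ = μ.support :=
  Set.ext fun _ => nhds_basis_closedBall.mem_measureSupport.symm

theorem measure_closedBall_eq_zero_of_lt_infDist [SecondCountableTopology X] {x : X} {r : ℝ}
    (h : r < infDist x (msupport μ)) : μ (closedBall x r) = 0 := by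
  refine measure_mono_null ?_ Measure.measure_compl_support
  rw [← msupport_eq_support, Set.subset_compl_iff_disjoint_right]
  exact disjoint_closedBall_of_lt_infDist h

theorem setIntegral_compl_closedBall_of_lt_infDist [SecondCountableTopology X]
    {E : Type*} [NormedAddCommGroup E] [NormedSpace ℝ E] (f : X → E) {x : X} {r : ℝ}
    (h : r < infDist x (msupport μ)) :
    ∫ y in (closedBall x r)ᶜ, f y ∂μ = ∫ y, f y ∂μ := by
  rw [Measure.restrict_eq_self_of_ae_mem]
  exact measure_eq_zero_iff_ae_notMem.1 (measure_closedBall_eq_zero_of_lt_infDist μ h)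

end Support

section Superlevel

variable {X : Type*} {F : X → ℝ} {s : Set X} {c L U : ℝ}

theorem subset_superlevel_ciSup (hc : 0 ≤ c) (hcUL : c * U ≤ L)
    (hlow : ∀ x ∈ s, L ≤ F x) (hup : ∀ x ∈ s, F x ≤ U) :
    s ⊆ {x | c * ⨆ z : s, F z ≤ F x} := by
  intro x hx
  have : Nonempty s := ⟨⟨x, hx⟩⟩
  calc c * ⨆ z : s, F z ≤ c * U := mul_le_mul_of_nonneg_left (ciSup_le fun z => hup z z.2) hc
    _ ≤ L := hcUL
    _ ≤ F x := hlow x hx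

theorem superlevel_ciSup_subset [PseudoMetricSpace X] {R : ℝ} (hc : 0 ≤ c) (hR : 0 ≤ R)
    (hlow : ∀ x ∈ s, L ≤ F x) (hup : ∀ x ∈ s, F x ≤ U)
    (hfar : ∀ x, R < infDist x s → F x < c * L) :
    {x | c * ⨆ z : s, F z ≤ F x} ⊆ {x | infDist x s ≤ R} := by
  intro x hx
  change c * ⨆ z : s, F z ≤ F x at hx
  change infDist x s ≤ R
  by_contra! hxR
  obtain ⟨z, hz⟩ : s.Nonempty := by
    by_contra! hs
    rw [hs, infDist_empty] at hxR
    exact hxR.not_ge hR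
  have hbdd : BddAbove (Set.range fun z : s => F z) := ⟨U, by rintro _ ⟨w, rfl⟩; exact hup w w.2⟩
  have hLI : L ≤ ⨆ w : s, F w := (hlow z hz).trans (le_ciSup hbdd ⟨z, hz⟩)
  exact (hfar x hxR).not_ge ((mul_le_mul_of_nonneg_left hLI hc).trans hx)

end Superlevel

theorem Real.rpow_one_div_rpow_neg {a t : ℝ} (ha : 0 ≤ a) (ht : t ≠ 0) :
    (a ^ (1 / t)) ^ (-t) = a⁻¹ := by
  rw [← Real.rpow_mul ha, one_div_mul_eq_div, neg_div, div_self ht, Real.rpow_neg_one]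

theorem stmt8_general (q : ℕ)
    (μ : Measure (Fin q → ℝ))
    (Φ : (Fin q → ℝ) → (Fin q → ℝ) → ℝ)
    (n α S θ C₃ C₄ : ℝ)
    (hn : 1 ≤ n) (hS : α < S) (hC₃ : 0 < C₃) (hC₄ : 0 < C₄)
    (hθ : 0 < θ) (hθ2 : θ ≤ min ((4 * C₃ * C₄)⁻¹) (C₃ * C₄))
    (hlow : ∀ x ∈ msupport μ, n ^ (2 * (q : ℝ) - α) / C₄ ≤ ∫ y, (Φ x y) ^ 2 ∂μ)
    (hupper : ∀ x : Fin q → ℝ, ∫ y, (Φ x y) ^ 2 ∂μ ≤ C₃ * n ^ (2 * (q : ℝ) - α))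
    (hannulus : ∀ (x : Fin q → ℝ) (d : ℝ), 1 / n ≤ d →
      ∫ y in (Metric.closedBall x d)ᶜ, (Φ x y) ^ 2 ∂μ ≤
        C₃ * n ^ (2 * (q : ℝ) - α) * (n * d) ^ (α - S)) :
    msupport μ ⊆
      {x | 4 * θ * (⨆ z : msupport μ, ∫ y, (Φ z.1 y) ^ 2 ∂μ) ≤ ∫ y, (Φ x y) ^ 2 ∂μ} ∧
    {x | 4 * θ * (⨆ z : msupport μ, ∫ y, (Φ z.1 y) ^ 2 ∂μ) ≤ ∫ y, (Φ x y) ^ 2 ∂μ} ⊆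
      {x | Metric.infDist x (msupport μ) ≤ (C₃ * C₄ / θ) ^ ((1 : ℝ) / (S - α)) / n} := by
  obtain ⟨hθ₁, hθ₂⟩ := le_min_iff.1 hθ2
  have hn₀ : 0 < n := one_pos.trans_le hn
  set N := n ^ (2 * (q : ℝ) - α)
  have hN : 0 < N := Real.rpow_pos_of_pos hn₀ _
  set d := (C₃ * C₄ / θ) ^ ((1 : ℝ) / (S - α))
  have hbase : 1 ≤ C₃ * C₄ / θ := (one_le_div hθ).2 hθ₂
  have hd : 1 ≤ d := Real.one_le_rpow hbase (by simpa using hS.le)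
  have hd_pow : d ^ (α - S) = θ / (C₃ * C₄) := by
    rw [← neg_sub, Real.rpow_one_div_rpow_neg (by positivity) (sub_pos.2 hS).ne', inv_div]
  have hθC : 4 * θ * (C₃ * N) ≤ N / C₄ := by
    have hθ₄ : 4 * C₃ * C₄ * θ ≤ 1 := (le_inv_mul_iff₀ (by positivity)).1 (by rwa [mul_one])
    rw [le_div_iff₀ hC₄]
    nlinarith
  refine ⟨subset_superlevel_ciSup (by positivity) hθC hlow (fun x _ => hupper x),
    superlevel_ciSup_subset (by positivity) (by positivity) hlow (fun x _ => hupper x) ?_⟩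
  intro x hx
  calc ∫ y, (Φ x y) ^ 2 ∂μ = ∫ y in (closedBall x (d / n))ᶜ, (Φ x y) ^ 2 ∂μ :=
        (setIntegral_compl_closedBall_of_lt_infDist μ _ hx).symm
    _ ≤ C₃ * N * (n * (d / n)) ^ (α - S) := hannulus x _ (div_le_div_of_nonneg_right hd hn₀.le)
    _ = θ * (N / C₄) := by rw [mul_div_cancel₀ _ hn₀.ne', hd_pow]; field_simp
    _ < 4 * θ * (N / C₄) := by nlinarith [mul_pos hθ (div_pos hN hC₄)]

/-- support detection.  supp(μ) ⊆ S_n(θ) ⊆ {dist(·, supp μ) ≤ d(θ)/n}. -/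
theorem stmt8 (q : ℕ) (hq : 1 ≤ q)
    (μ : Measure (Fin q → ℝ)) [IsProbabilityMeasure μ]
    (Φ : (Fin q → ℝ) → (Fin q → ℝ) → ℝ)
    (hΦmeas : ∀ x, Measurable (Φ x))
    (n α S θ C₃ C₄ κ κ₄ : ℝ)
    (hn : 1 ≤ n) (hα : 0 ≤ α) (hS : α < S) (hC₃ : 0 < C₃) (hC₄ : 0 < C₄)
    (hκ : 0 < κ) (hκ₄ : 0 < κ₄)
    (hsupp : msupport μ ⊆ Metric.closedBall 0 (κ * n))
    (hθ : 0 < θ) (hθ2 : θ ≤ min ((4 * C₃ * C₄)⁻¹) (C₃ * C₄))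
    (hdecay : ∀ x y, (Φ x y) ^ 2 ≤ κ₄ * n ^ (2 * (q : ℝ)) / max 1 ((n * dist x y) ^ S))
    (hlow : ∀ x ∈ msupport μ, n ^ (2 * (q : ℝ) - α) / C₄ ≤ ∫ y, (Φ x y) ^ 2 ∂μ)
    (hupper : ∀ x : Fin q → ℝ, ∫ y, (Φ x y) ^ 2 ∂μ ≤ C₃ * n ^ (2 * (q : ℝ) - α))
    (hannulus : ∀ (x : Fin q → ℝ) (d : ℝ), 1 / n ≤ d →
      ∫ y in (Metric.closedBall x d)ᶜ, (Φ x y) ^ 2 ∂μ ≤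
        C₃ * n ^ (2 * (q : ℝ) - α) * (n * d) ^ (α - S)) :
    msupport μ ⊆
      {x | 4 * θ * (⨆ z : msupport μ, ∫ y, (Φ z.1 y) ^ 2 ∂μ) ≤ ∫ y, (Φ x y) ^ 2 ∂μ} ∧
    {x | 4 * θ * (⨆ z : msupport μ, ∫ y, (Φ z.1 y) ^ 2 ∂μ) ≤ ∫ y, (Φ x y) ^ 2 ∂μ} ⊆
      {x | Metric.infDist x (msupport μ) ≤ (C₃ * C₄ / θ) ^ ((1 : ℝ) / (S - α)) / n} :=
  stmt8_general q μ Φ n α S θ C₃ C₄ hn hS hC₃ hC₄ hθ hθ2 hlow hupper hannulus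
end

section
/- Let (Ω, 𝓑, μ) be a probability space, X a topological space, W a linear subspace of C₀(X) admitting a finite norming set C: sup_{x∈X}|f(x)| ≤ N · sup_{y∈C}|f(y)| for all f ∈ W, where N = 𝔫(W,C). Let Z : Ω → W satisfy |Z(ω)(x)| ≤ R for all ω ∈ Ω, x ∈ X. Then for any δ > 0 and independent samples ω₁,…,ω_M drawn from μ: ℙ( sup_{x∈X} |(1/M)Σ_{j=1}^M Z(ω_j)(x) − 𝔼_μ[Z(·)(x)]| ≥ 4NR√(log(2|C|/δ)/M) ) ≤ δ. -/
/-!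
Hoeffding's inequality, applied under the product measure to the centred coordinates
`ω ↦ Z ω y - 𝔼[Z · y]` at each point `y` of the norming set, and a union bound over `C`, control
the empirical mean minus the expectation on `C`. To transfer this to all of `X` through the
norming inequality one needs the expectation `e` in `W`, which need not hold (`W` need not be
closed, nor `Z` Bochner integrable in `C₀(X, ℝ)`). It suffices that `e` agrees with an element of
`W` on every finite set: restricted to a finite set `S`, the expectation is the integral of a
function with values in the finite-dimensional, hence closed, image of `W` in `S → ℝ`.
-/

open MeasureTheory ProbabilityTheory Real
open scoped NNReal ZeroAtInfty

section MeanInSubmodule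

variable {Ω : Type*} [MeasurableSpace Ω] {μ : Measure Ω} [IsProbabilityMeasure μ]

theorem Submodule.integral_mem_of_forall_mem {F : Type*} [NormedAddCommGroup F]
    [NormedSpace ℝ F] [FiniteDimensional ℝ F] (V : Submodule ℝ F) {f : Ω → F} (hf : ∀ ω, f ω ∈ V) :
    ∫ ω, f ω ∂μ ∈ V := by
  by_cases hfi : Integrable f μ
  · exact V.convex.integral_mem V.closed_of_finiteDimensional (ae_of_all _ hf) hfi
  · simp [integral_undef hfi]

theorem Submodule.exists_eqOn_integral {X : Type*} [TopologicalSpace X]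
    (W : Submodule ℝ C₀(X, ℝ)) {Z : Ω → C₀(X, ℝ)} (hZW : ∀ ω, Z ω ∈ W)
    (hZi : ∀ x, Integrable (fun ω ↦ Z ω x) μ) (S : Finset X) :
    ∃ f ∈ W, Set.EqOn f (fun x ↦ ∫ ω, Z ω x ∂μ) S := by
  let restrict : C₀(X, ℝ) →ₗ[ℝ] (S → ℝ) :=
    { toFun f s := f s, map_add' _ _ := rfl, map_smul' _ _ := rfl }
  obtain ⟨f, hfW, hf⟩ := (W.map restrict).integral_mem_of_forall_mem (μ := μ)
    fun ω ↦ Submodule.mem_map_of_mem (f := restrict) (hZW ω)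
  refine ⟨f, hfW, fun s hs ↦ ?_⟩
  simpa [restrict, eval_integral fun s : S ↦ hZi s] using congrFun hf ⟨s, hs⟩

end MeanInSubmodule

namespace ProbabilityTheory

variable {Ω : Type*} [MeasurableSpace Ω] {μ : Measure Ω} [IsProbabilityMeasure μ]

theorem hasSubgaussianMGF_sub_integral_of_abs_le {φ : Ω → ℝ} (hφ : Measurable φ) {R : ℝ}
    (hφR : ∀ ω, |φ ω| ≤ R) : HasSubgaussianMGF (fun ω ↦ φ ω - μ[φ]) (‖R‖₊ ^ 2) μ := by
  have h := hasSubgaussianMGF_of_mem_Icc (μ := μ) hφ.aemeasurable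
    (ae_of_all _ fun ω ↦ abs_le.mp (hφR ω))
  have hc : (‖R - -R‖₊ / 2) ^ 2 = ‖R‖₊ ^ 2 := by
    rw [sub_neg_eq_add, ← two_mul, nnnorm_mul]
    simp
  rwa [hc] at h

namespace HasSubgaussianMGF

variable {Y : Ω → ℝ} {c : ℝ≥0}

theorem measureReal_pi_sum_ge_le (hY : HasSubgaussianMGF Y c μ) (M : ℕ) {ε : ℝ} (hε : 0 ≤ ε) :
    (Measure.pi fun _ : Fin M ↦ μ).real {w | ε ≤ ∑ j, Y (w j)} ≤
      exp (-ε ^ 2 / (2 * M * c)) := by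
  have hindep : iIndepFun (fun (j : Fin M) (w : Fin M → Ω) ↦ Y (w j))
      (Measure.pi fun _ ↦ μ) := iIndepFun_pi fun _ ↦ hY.aemeasurable
  have hsubG (j : Fin M) :
      HasSubgaussianMGF (fun w : Fin M → Ω ↦ Y (w j)) c (Measure.pi fun _ ↦ μ) :=
    .of_map (measurable_pi_apply j).aemeasurable <| by
      rwa [(measurePreserving_eval (fun _ ↦ μ) j).map_eq]
  simpa [mul_assoc] using measure_sum_ge_le_of_iIndepFun hindep
    (c := fun _ ↦ c) (s := Finset.univ) (fun j _ ↦ hsubG j) hε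

theorem measureReal_pi_abs_sum_ge_le (hY : HasSubgaussianMGF Y c μ) (M : ℕ) {ε : ℝ}
    (hε : 0 ≤ ε) :
    (Measure.pi fun _ : Fin M ↦ μ).real {w | ε ≤ |∑ j, Y (w j)|} ≤
      2 * exp (-ε ^ 2 / (2 * M * c)) := by
  have hsplit : {w : Fin M → Ω | ε ≤ |∑ j, Y (w j)|} =
      {w | ε ≤ ∑ j, Y (w j)} ∪ {w | ε ≤ ∑ j, (-Y) (w j)} := by
    ext w
    simp [le_abs]
  rw [hsplit, two_mul]
  exact (measureReal_union_le _ _).trans <|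
    add_le_add (hY.measureReal_pi_sum_ge_le M hε) (hY.neg.measureReal_pi_sum_ge_le M hε)

end HasSubgaussianMGF

end ProbabilityTheory

theorem ZeroAtInftyContinuousMap.coe_sum {X β ι : Type*} [TopologicalSpace X]
    [TopologicalSpace β] [AddCommMonoid β] [ContinuousAdd β] (s : Finset ι) (f : ι → C₀(X, β)) :
    ⇑(∑ i ∈ s, f i) = ∑ i ∈ s, ⇑(f i) :=
  map_sum ({ toFun := (⇑), map_zero' := coe_zero, map_add' := coe_add } : C₀(X, β) →+ X → β)
    f s

section NormingSet

variable {X : Type*} [TopologicalSpace X] {W : Submodule ℝ C₀(X, ℝ)} {C : Finset X}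
  (hC : C.Nonempty) {N : ℝ} {e : X → ℝ}

theorem abs_sub_le_mul_sup'_of_forall_exists_eqOn
    (hnorm : ∀ f ∈ W, ∀ x : X, |f x| ≤ N * C.sup' hC fun y => |f y|)
    (he : ∀ S : Finset X, ∃ f ∈ W, Set.EqOn f e S) {g : C₀(X, ℝ)} (hg : g ∈ W) (x : X) :
    |g x - e x| ≤ N * C.sup' hC fun y => |g y - e y| := by
  classical
  obtain ⟨f, hfW, hfe⟩ := he (insert x C)
  have hfC : ∀ y ∈ C, |(g - f) y| = |g y - e y| := fun y hy ↦ by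
    rw [ZeroAtInftyContinuousMap.sub_apply, hfe (Finset.mem_insert_of_mem hy)]
  have key := hnorm (g - f) (W.sub_mem hg hfW) x
  rwa [Finset.sup'_congr hC rfl hfC, ZeroAtInftyContinuousMap.sub_apply,
    hfe (Finset.mem_insert_self x C)] at key

theorem exists_mem_le_abs_sub_of_mul_le_iSup (hN : 0 < N)
    (hnorm : ∀ f ∈ W, ∀ x : X, |f x| ≤ N * C.sup' hC fun y => |f y|)
    (he : ∀ S : Finset X, ∃ f ∈ W, Set.EqOn f e S) {g : C₀(X, ℝ)} (hg : g ∈ W) {t : ℝ}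
    (ht : N * t ≤ ⨆ x, |g x - e x|) : ∃ y ∈ C, t ≤ |g y - e y| := by
  have : Nonempty X := ⟨hC.choose⟩
  rw [← Finset.le_sup'_iff hC, ← mul_le_mul_iff_right₀ hN]
  exact ht.trans <| ciSup_le <| abs_sub_le_mul_sup'_of_forall_exists_eqOn hC hnorm he hg

theorem exists_mem_le_abs_sum_sub_of_mul_le_iSup (hN : 0 < N)
    (hnorm : ∀ f ∈ W, ∀ x : X, |f x| ≤ N * C.sup' hC fun y => |f y|)
    (he : ∀ S : Finset X, ∃ f ∈ W, Set.EqOn f e S) {M : ℕ} (hM : 0 < M)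
    {f : Fin M → C₀(X, ℝ)} (hf : ∀ j, f j ∈ W) {t : ℝ}
    (ht : N * t ≤ ⨆ x, |(1 / (M : ℝ)) * ∑ j, f j x - e x|) :
    ∃ y ∈ C, M * t ≤ |∑ j, (f j y - e y)| := by
  set g : C₀(X, ℝ) := (1 / (M : ℝ)) • ∑ j, f j
  have hgW : g ∈ W := W.smul_mem _ (W.sum_mem fun j _ ↦ hf j)
  have hg (x : X) : g x = (1 / (M : ℝ)) * ∑ j, f j x := by
    simp [g, ZeroAtInftyContinuousMap.coe_sum]
  obtain ⟨y, hyC, hy⟩ :=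
    exists_mem_le_abs_sub_of_mul_le_iSup hC hN hnorm he hgW (by simpa only [hg] using ht)
  have hM' : (0 : ℝ) < M := Nat.cast_pos.mpr hM
  have hsum : ∑ j, (f j y - e y) = M * (g y - e y) := by
    rw [hg, Finset.sum_sub_distrib, Finset.sum_const, Finset.card_univ, Fintype.card_fin,
      nsmul_eq_mul]
    field_simp
  refine ⟨y, hyC, ?_⟩
  rw [hsum, abs_mul, abs_of_pos hM']
  gcongr

end NormingSet

theorem two_mul_exp_le_of_sqrt_log {R M k δ : ℝ} (hR : R ≠ 0) (hM : 0 < M) (hk : 0 < k)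
    (hδ : 0 < δ) :
    2 * exp (-(M * (4 * R * √(log (2 * k / δ) / M))) ^ 2 / (2 * M * R ^ 2)) ≤ δ / k := by
  set L := log (2 * k / δ)
  set s := √(L / M)
  have hL : L ≤ M * s ^ 2 := by
    rw [sq_sqrt']
    calc L = M * (L / M) := by field_simp
      _ ≤ M * max (L / M) 0 := by gcongr; exact le_max_left _ _
  have hexponent : (M * (4 * R * s)) ^ 2 / (2 * M * R ^ 2) = 8 * (M * s ^ 2) := by
    field_simp
    ring
  calc 2 * exp (-(M * (4 * R * s)) ^ 2 / (2 * M * R ^ 2)) ≤ 2 * exp (-L) := by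
        rw [neg_div, hexponent]
        gcongr
        nlinarith [sq_nonneg s]
    _ = δ / k := by
        rw [exp_neg, exp_log (by positivity)]
        field_simp

/-- uniform concentration of empirical means over a subspace of C₀(X)
admitting a finite norming set. -/
theorem stmt11 {Ω X : Type*} [MeasurableSpace Ω] [TopologicalSpace X]
    (μ : Measure Ω) [IsProbabilityMeasure μ]
    (W : Submodule ℝ C₀(X, ℝ))
    (C : Finset X) (hCne : C.Nonempty) (N R : ℝ) (hN : 0 < N) (hR : 0 < R)
    (hnorm : ∀ f ∈ W, ∀ x : X, |f x| ≤ N * C.sup' hCne fun y => |f y|)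
    (Z : Ω → W)
    (hZmeas : ∀ x : X, Measurable fun ω => ((Z ω : C₀(X, ℝ)) x))
    (hZbd : ∀ ω x, |(Z ω : C₀(X, ℝ)) x| ≤ R)
    (δ : ℝ) (hδ : 0 < δ) (M : ℕ) (hM : 0 < M) :
    (Measure.pi fun _ : Fin M => μ)
      {w : Fin M → Ω |
        4 * N * R * Real.sqrt (Real.log (2 * C.card / δ) / M) ≤
          ⨆ x : X,
            |(1 / (M : ℝ)) * ∑ j, (Z (w j) : C₀(X, ℝ)) x - ∫ ω, (Z ω : C₀(X, ℝ)) x ∂μ|} ≤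
      ENNReal.ofReal δ := by
  set e : X → ℝ := fun x ↦ ∫ ω, (Z ω : C₀(X, ℝ)) x ∂μ
  set s := √(log (2 * C.card / δ) / M)
  have hsubG (y : X) :
      HasSubgaussianMGF (fun ω ↦ (Z ω : C₀(X, ℝ)) y - e y) (‖R‖₊ ^ 2) μ :=
    hasSubgaussianMGF_sub_integral_of_abs_le (hZmeas y) (hZbd · y)
  have he : ∀ S : Finset X, ∃ f ∈ W, Set.EqOn f e S :=
    W.exists_eqOn_integral (fun ω ↦ (Z ω).2) fun x ↦
      .of_bound (hZmeas x).aestronglyMeasurable R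
        (ae_of_all _ fun ω ↦ (norm_eq_abs _).trans_le (hZbd ω x))
  have hsub : {w : Fin M → Ω |
      4 * N * R * s ≤ ⨆ x, |(1 / (M : ℝ)) * ∑ j, (Z (w j) : C₀(X, ℝ)) x - e x|} ⊆
      ⋃ y ∈ C, {w | M * (4 * R * s) ≤ |∑ j, ((Z (w j) : C₀(X, ℝ)) y - e y)|} :=
    fun w (hw : 4 * N * R * s ≤ _) ↦ by
      obtain ⟨y, hyC, hy⟩ := exists_mem_le_abs_sum_sub_of_mul_le_iSup hCne hN hnorm he hM
        (fun j ↦ (Z (w j)).2) ((by ring : N * (4 * R * s) = 4 * N * R * s).trans_le hw)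
      exact Set.mem_biUnion hyC hy
  have hpoint (y : X) : (Measure.pi fun _ : Fin M ↦ μ)
      {w | M * (4 * R * s) ≤ |∑ j, ((Z (w j) : C₀(X, ℝ)) y - e y)|} ≤
        ENNReal.ofReal (δ / C.card) := by
    refine (ENNReal.le_ofReal_iff_toReal_le (measure_ne_top _ _) (by positivity)).mpr ?_
    refine ((hsubG y).measureReal_pi_abs_sum_ge_le M (by positivity)).trans ?_
    simpa only [NNReal.coe_pow, coe_nnnorm, norm_eq_abs, sq_abs] using
      two_mul_exp_le_of_sqrt_log hR.ne' (Nat.cast_pos.mpr hM) (Nat.cast_pos.mpr hCne.card_pos) hδ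
  calc _ ≤ _ := measure_mono hsub
    _ ≤ _ := measure_biUnion_finset_le _ _
    _ ≤ ∑ _y ∈ C, ENNReal.ofReal (δ / C.card) := Finset.sum_le_sum fun y _ ↦ hpoint y
    _ = ENNReal.ofReal δ := by
      rw [Finset.sum_const, nsmul_eq_mul, ← ENNReal.ofReal_natCast,
        ← ENNReal.ofReal_mul (by positivity), mul_div_cancel₀ _ (by positivity)]
end

section
/- Let I_n > 0, 0 < Θ ≤ 1, 0 < β ≤ C*Θ/2 for some constant C* ∈ (0,1], and let f : ℝ^q → [0,∞) and F : ℝ^q → [0,∞) satisfy: (i) |f(x) − F(x)| ≤ β I_n for all x, and (ii) C* I_n ≤ max_k f(x_k) ≤ (1+β) I_n over a finite sample {x_k}. Define G = {x : f(x) ≥ Θ max_k f(x_k)} and, for t > 0, S(t) = {x : F(x) ≥ 4t I_n}. Then S(t₁) ⊆ G ⊆ S(C*Θ/8), where t₁ = ((1+β)Θ + β)/4. -/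
/-- deterministic sandwich between the empirical threshold set G and
population threshold sets S(t₁) and S(C*Θ/8). -/
theorem stmt16 (q M : ℕ) (In Θ β Cstar : ℝ)
    (hIn : 0 < In) (hΘ0 : 0 < Θ) (hΘ1 : Θ ≤ 1)
    (hC0 : 0 < Cstar) (hC1 : Cstar ≤ 1) (hβ0 : 0 < β) (hβ : β ≤ Cstar * Θ / 2)
    (f F : (Fin q → ℝ) → ℝ) (hf : ∀ x, 0 ≤ f x) (hF : ∀ x, 0 ≤ F x)
    (happrox : ∀ x, |f x - F x| ≤ β * In)
    (x : Fin (M + 1) → (Fin q → ℝ))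
    (hmax1 : Cstar * In ≤ ⨆ k, f (x k)) (hmax2 : (⨆ k, f (x k)) ≤ (1 + β) * In) :
    {z : Fin q → ℝ | 4 * (((1 + β) * Θ + β) / 4) * In ≤ F z} ⊆
      {z : Fin q → ℝ | Θ * (⨆ k, f (x k)) ≤ f z} ∧
    {z : Fin q → ℝ | Θ * (⨆ k, f (x k)) ≤ f z} ⊆
      {z : Fin q → ℝ | 4 * (Cstar * Θ / 8) * In ≤ F z} := by
  constructor
  · intro z hz
    simp only [Set.mem_setOf_eq] at hz ⊢
    have h1 := (abs_le.mp (happrox z)).1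
    have h2 := mul_le_mul_of_nonneg_left hmax2 hΘ0.le
    nlinarith
  · intro z hz
    simp only [Set.mem_setOf_eq] at hz ⊢
    have h1 := (abs_le.mp (happrox z)).2
    have h2 := mul_le_mul_of_nonneg_left hmax1 hΘ0.le
    nlinarith
end
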